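/- Let A ⊆ ℝ^d and let f : ℝ^d → ℝ^d be an invertible function that is locally L-Lipschitz on A (i.e. ‖f(x₁) − f(x₂)‖ ≤ L·‖x₁ − x₂‖ whenever f(x₁), f(x₂) ∈ A), with L > 0. Let Z′ be a random vector taking values in A almost surely with mean z = 𝔼[Z′] ∈ A, set X′ = f⁻¹(Z′) and x = f⁻¹(z), and suppose X′ is Gaussian with mean x and covariance Σ = σ²·I_d with σ > 0. Then for every ε ≥ 0, writing B^ε_z = {z′ ∈ A : ‖z′ − z‖ < ε}, one has (ε²/L²)·(1 − ℙ(Z′ ∈ B^ε_z)) ≤ (d/(2πe))·exp((2/d)·H_Σ), where H_Σ = (d/2)·(1 + log(2π)) + (1/2)·log(det Σ) is the differential entropy of N(x, Σ); equivalently, the right-hand side equals d·σ². -/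

import Mathlib

/-!
On the event that `Z'` lies in `A` but outside the `ε`-ball around `z`, the local Lipschitz bound
gives `ε ≤ ‖f X' - f x‖ ≤ L ‖X' - x‖`. As `Z' ∈ A` almost surely, `1 - ℙ(Z' ∈ B^ε_z)` is at most
`ℙ(L ‖X' - x‖ ≥ ε)`, which Markov's inequality bounds by `(L² / ε²) 𝔼‖X' - x‖²`. The Gaussian
density is a product of `d` one-dimensional `N(xᵢ, σ²)` densities, so `𝔼‖X' - x‖² = d σ²`; and
`det Σ = σ^(2d)` turns `(d / (2πe)) exp((2/d) H_Σ)` into `d σ²` as well.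
-/

open MeasureTheory ProbabilityTheory Real
open scoped ENNReal NNReal

lemma integral_sq_sub_mul_gaussianPDFReal (m : ℝ) {v : ℝ≥0} (hv : v ≠ 0) :
    ∫ t, (t - m) ^ 2 * gaussianPDFReal m v t = v := by
  have h := variance_fun_id_gaussianReal (μ := m) (v := v)
  rw [variance_eq_integral aemeasurable_id', integral_id_gaussianReal,
    integral_gaussianReal_eq_integral_smul hv] at h
  simpa only [smul_eq_mul, mul_comm] using h

lemma integrable_sq_sub_mul_gaussianPDFReal (m : ℝ) {v : ℝ≥0} (hv : v ≠ 0) :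
    Integrable fun t => (t - m) ^ 2 * gaussianPDFReal m v t := by
  have h : Integrable (fun t => (t - m) ^ 2) (gaussianReal m v) :=
    ((memLp_id_gaussianReal 2).sub (memLp_const m)).integrable_sq
  rw [gaussianReal_of_var_ne_zero m hv, integrable_withDensity_iff_integrable_smul'
    (measurable_gaussianPDF m v) (ae_of_all _ fun _ => gaussianPDF_lt_top)] at h
  simpa only [toReal_gaussianPDF, smul_eq_mul, mul_comm] using h

section ProductDensity

variable {ι : Type*} [Fintype ι] (m : ι → ℝ) {v : ℝ≥0}

lemma sq_sub_mul_prod_gaussianPDFReal_eq_prod [DecidableEq ι] (w : ι → ℝ) (i : ι) :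
    (w i - m i) ^ 2 * ∏ j, gaussianPDFReal (m j) v (w j) =
      ∏ j, (if j = i then (w j - m j) ^ 2 else 1) * gaussianPDFReal (m j) v (w j) := by
  rw [Finset.prod_mul_distrib, Finset.prod_ite_eq' Finset.univ i, if_pos (Finset.mem_univ i)]

lemma integrable_sq_sub_mul_prod_gaussianPDFReal (hv : v ≠ 0) (i : ι) :
    Integrable fun w : ι → ℝ => (w i - m i) ^ 2 * ∏ j, gaussianPDFReal (m j) v (w j) := by
  classical
  simp_rw [sq_sub_mul_prod_gaussianPDFReal_eq_prod]
  refine Integrable.fintype_prod (μ := fun _ => volume)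
    (f := fun j t => (if j = i then (t - m j) ^ 2 else 1) * gaussianPDFReal (m j) v t) fun j => ?_
  split_ifs
  · exact integrable_sq_sub_mul_gaussianPDFReal (m j) hv
  · simpa only [one_mul] using integrable_gaussianPDFReal (m j) v

lemma integral_sq_sub_mul_prod_gaussianPDFReal (hv : v ≠ 0) (i : ι) :
    ∫ w : ι → ℝ, (w i - m i) ^ 2 * ∏ j, gaussianPDFReal (m j) v (w j) = v := by
  classical
  simp_rw [sq_sub_mul_prod_gaussianPDFReal_eq_prod]
  rw [integral_fintype_prod_volume_eq_prod
    (fun j t => (if j = i then (t - m j) ^ 2 else 1) * gaussianPDFReal (m j) v t)]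
  have hfactor : ∀ j, ∫ t, (if j = i then (t - m j) ^ 2 else 1) * gaussianPDFReal (m j) v t =
      if j = i then (v : ℝ) else 1 := by
    intro j
    split_ifs
    · exact integral_sq_sub_mul_gaussianPDFReal (m j) hv
    · simpa only [one_mul] using integral_gaussianPDFReal_eq_one (m j) hv
  simp_rw [hfactor, Finset.prod_ite_eq' Finset.univ i, if_pos (Finset.mem_univ i)]

end ProductDensity

section EuclideanDensity

variable {ι : Type*} [Fintype ι] (x : EuclideanSpace ℝ ι) {v : ℝ≥0}

lemma gaussianDensity_eq_prod_gaussianPDFReal (y : EuclideanSpace ℝ ι) :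
    (2 * π * v) ^ (-(Fintype.card ι : ℝ) / 2) * exp (-‖y - x‖ ^ 2 / (2 * v)) =
      ∏ i, gaussianPDFReal (x i) v (y i) := by
  have h2πv : (0 : ℝ) ≤ 2 * π * v := by positivity
  simp only [gaussianPDFReal, Finset.prod_mul_distrib, ← exp_sum, Finset.prod_const,
    Finset.card_univ]
  congr 1
  · rw [sqrt_eq_rpow, ← rpow_neg h2πv, ← rpow_mul_natCast h2πv]
    ring_nf
  · rw [EuclideanSpace.real_norm_sq_eq, neg_div, Finset.sum_div, ← Finset.sum_neg_distrib]
    simp only [PiLp.sub_apply, neg_div]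

lemma integrable_norm_sub_sq_mul_prod_gaussianPDFReal (hv : v ≠ 0) :
    Integrable fun y : EuclideanSpace ℝ ι => ‖y - x‖ ^ 2 * ∏ i, gaussianPDFReal (x i) v (y i) := by
  rw [← (PiLp.volume_preserving_toLp ι).integrable_comp_emb
    (MeasurableEquiv.toLp 2 (ι → ℝ)).measurableEmbedding]
  simp only [Function.comp_def, EuclideanSpace.real_norm_sq_eq, PiLp.sub_apply,
    Finset.sum_mul]
  exact integrable_finsetSum _ fun i _ => integrable_sq_sub_mul_prod_gaussianPDFReal _ hv i

lemma integral_norm_sub_sq_mul_prod_gaussianPDFReal (hv : v ≠ 0) :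
    ∫ y : EuclideanSpace ℝ ι, ‖y - x‖ ^ 2 * ∏ i, gaussianPDFReal (x i) v (y i) =
      Fintype.card ι * v := by
  rw [← (PiLp.volume_preserving_toLp ι).integral_comp
    (MeasurableEquiv.toLp 2 (ι → ℝ)).measurableEmbedding]
  simp only [EuclideanSpace.real_norm_sq_eq, PiLp.sub_apply, Finset.sum_mul]
  rw [integral_finsetSum _ fun i _ => integrable_sq_sub_mul_prod_gaussianPDFReal _ hv i]
  simp [integral_sq_sub_mul_prod_gaussianPDFReal _ hv]

end EuclideanDensity

lemma integrable_and_integral_norm_sub_sq_of_map_eq_gaussian {Ω : Type*} [MeasurableSpace Ω]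
    {μ : Measure Ω} {ι : Type*} [Fintype ι] {X : Ω → EuclideanSpace ℝ ι} (hX : Measurable X)
    (x : EuclideanSpace ℝ ι) {v : ℝ≥0} (hv : v ≠ 0)
    (hgauss : μ.map X = volume.withDensity fun y => ENNReal.ofReal
      ((2 * π * v) ^ (-(Fintype.card ι : ℝ) / 2) * exp (-‖y - x‖ ^ 2 / (2 * v)))) :
    Integrable (fun ω => ‖X ω - x‖ ^ 2) μ ∧ ∫ ω, ‖X ω - x‖ ^ 2 ∂μ = Fintype.card ι * v := by
  simp_rw [gaussianDensity_eq_prod_gaussianPDFReal] at hgauss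
  have hdens : Measurable fun y : EuclideanSpace ℝ ι =>
      ENNReal.ofReal (∏ i, gaussianPDFReal (x i) v (y i)) := by fun_prop
  have hdens_nonneg (y : EuclideanSpace ℝ ι) : 0 ≤ ∏ i, gaussianPDFReal (x i) v (y i) :=
    Finset.prod_nonneg fun i _ => gaussianPDFReal_nonneg _ _ _
  have hweight (y : EuclideanSpace ℝ ι) :
      (ENNReal.ofReal (∏ i, gaussianPDFReal (x i) v (y i))).toReal • ‖y - x‖ ^ 2 =
        ‖y - x‖ ^ 2 * ∏ i, gaussianPDFReal (x i) v (y i) := by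
    rw [ENNReal.toReal_ofReal (hdens_nonneg y), smul_eq_mul, mul_comm]
  have hsq : Continuous fun y : EuclideanSpace ℝ ι => ‖y - x‖ ^ 2 := by fun_prop
  constructor
  · refine (integrable_map_measure hsq.aestronglyMeasurable hX.aemeasurable).mp ?_
    rw [hgauss, integrable_withDensity_iff_integrable_smul' hdens
      (ae_of_all _ fun _ => ENNReal.ofReal_lt_top)]
    simp_rw [hweight]
    exact integrable_norm_sub_sq_mul_prod_gaussianPDFReal x hv
  · rw [← integral_map hX.aemeasurable hsq.aestronglyMeasurable, hgauss,
      integral_withDensity_eq_integral_toReal_smul hdens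
      (ae_of_all _ fun _ => ENNReal.ofReal_lt_top)]
    simp_rw [hweight]
    exact integral_norm_sub_sq_mul_prod_gaussianPDFReal x hv

section Deviation

variable {Ω E : Type*} [MeasurableSpace Ω] {μ : Measure Ω} [SeminormedAddCommGroup E]

lemma one_sub_measureReal_le_of_lipschitzOn_image [IsProbabilityMeasure μ] {F : Type*}
    [SeminormedAddCommGroup F] {A : Set F} {f : E → F} {L ε : ℝ}
    (hlip : ∀ x₁ x₂, f x₁ ∈ A → f x₂ ∈ A → ‖f x₁ - f x₂‖ ≤ L * ‖x₁ - x₂‖)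
    {Z : Ω → F} (hZA : ∀ᵐ ω ∂μ, Z ω ∈ A) {z : F} (hzA : z ∈ A)
    {X : Ω → E} (hXZ : ∀ ω, f (X ω) = Z ω) {x : E} (hx : f x = z) :
    1 - μ.real {ω | Z ω ∈ A ∧ ‖Z ω - z‖ < ε} ≤ μ.real {ω | ε ≤ L * ‖X ω - x‖} := by
  set B := {ω | Z ω ∈ A ∧ ‖Z ω - z‖ < ε}
  set S := {ω | ε ≤ L * ‖X ω - x‖}
  have hcover : ∀ᵐ ω ∂μ, ω ∈ B ∪ S := by
    filter_upwards [hZA] with ω hω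
    rcases lt_or_ge ‖Z ω - z‖ ε with hlt | hge
    · exact Or.inl ⟨hω, hlt⟩
    · refine Or.inr (hge.trans ?_)
      have := hlip (X ω) x (hXZ ω ▸ hω) (hx ▸ hzA)
      rwa [hXZ, hx] at this
  have hfull : μ.real (B ∪ S) = 1 := by
    rw [measureReal_congr (ae_eq_univ.mpr (ae_iff.mp hcover)), probReal_univ]
  linarith [measureReal_union_le (μ := μ) B S]

lemma sq_div_sq_mul_measureReal_le_integral_norm_sub_sq [IsFiniteMeasure μ] {X : Ω → E} {x : E}
    (hint : Integrable (fun ω => ‖X ω - x‖ ^ 2) μ) {L ε : ℝ} (hL : 0 < L) (hε : 0 ≤ ε) :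
    ε ^ 2 / L ^ 2 * μ.real {ω | ε ≤ L * ‖X ω - x‖} ≤ ∫ ω, ‖X ω - x‖ ^ 2 ∂μ := by
  calc ε ^ 2 / L ^ 2 * μ.real {ω | ε ≤ L * ‖X ω - x‖}
      ≤ ε ^ 2 / L ^ 2 * μ.real {ω | ε ^ 2 / L ^ 2 ≤ ‖X ω - x‖ ^ 2} := by
        refine mul_le_mul_of_nonneg_left (measureReal_mono fun ω hω => ?_) (by positivity)
        rw [Set.mem_ofPred_eq, ← div_pow]
        exact pow_le_pow_left₀ (by positivity) ((div_le_iff₀' hL).mpr hω) 2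
    _ ≤ ∫ ω, ‖X ω - x‖ ^ 2 ∂μ :=
        mul_meas_ge_le_integral_of_nonneg (ae_of_all _ fun _ => by positivity) hint _

end Deviation

noncomputable def gaussianEntropy (d : ℕ) (S : Matrix (Fin d) (Fin d) ℝ) : ℝ :=
  (d / 2) * (1 + log (2 * π)) + (1 / 2) * log S.det

lemma div_mul_exp_gaussianEntropy_smul_one (d : ℕ) {σ : ℝ} (hσ : σ ≠ 0) :
    d / (2 * π * exp 1) * exp ((2 / d) * gaussianEntropy d (σ ^ 2 • 1)) = d * σ ^ 2 := by
  rcases Nat.eq_zero_or_pos d with rfl | hd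
  · simp
  have hdet : (σ ^ 2 • (1 : Matrix (Fin d) (Fin d) ℝ)).det = (σ ^ 2) ^ d := by
    rw [Matrix.det_smul, Matrix.det_one, mul_one, Fintype.card_fin]
  have hexponent : (2 / d) * gaussianEntropy d (σ ^ 2 • 1) = 1 + log (2 * π) + log (σ ^ 2) := by
    rw [gaussianEntropy, hdet, log_pow]
    field_simp
  rw [hexponent, exp_add, exp_add, exp_log (by positivity), exp_log (by positivity)]
  field_simp

theorem stmt9_general {d : ℕ} {Ω : Type*} [MeasurableSpace Ω] (μ : Measure Ω)
    [IsProbabilityMeasure μ]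
    (A : Set (EuclideanSpace ℝ (Fin d)))
    (f : EuclideanSpace ℝ (Fin d) → EuclideanSpace ℝ (Fin d))
    (L : ℝ) (hL : 0 < L)
    (hlip : ∀ x₁ x₂ : EuclideanSpace ℝ (Fin d),
      f x₁ ∈ A → f x₂ ∈ A → ‖f x₁ - f x₂‖ ≤ L * ‖x₁ - x₂‖)
    (Z' : Ω → EuclideanSpace ℝ (Fin d))
    (hZA : ∀ᵐ ω ∂μ, Z' ω ∈ A)
    (z : EuclideanSpace ℝ (Fin d)) (hzA : z ∈ A)
    (X' : Ω → EuclideanSpace ℝ (Fin d)) (hX' : ∀ ω, f (X' ω) = Z' ω)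
    (hXmeas : Measurable X')
    (x : EuclideanSpace ℝ (Fin d)) (hx : f x = z)
    (σ : ℝ) (hσ : 0 < σ)
    (hgauss : Measure.map X' μ =
      volume.withDensity (fun y => ENNReal.ofReal
        ((2 * Real.pi * σ ^ 2) ^ (-(d : ℝ) / 2) *
          Real.exp (-‖y - x‖ ^ 2 / (2 * σ ^ 2)))))
    (ε : ℝ) (hε : 0 ≤ ε) :
    (ε ^ 2 / L ^ 2) * (1 - (μ {ω | Z' ω ∈ A ∧ ‖Z' ω - z‖ < ε}).toReal) ≤
        ((d : ℝ) / (2 * Real.pi * Real.exp 1)) *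
          Real.exp ((2 / (d : ℝ)) *
            (((d : ℝ) / 2) * (1 + Real.log (2 * Real.pi)) +
              (1 / 2) * Real.log ((σ ^ 2 • (1 : Matrix (Fin d) (Fin d) ℝ)).det))) ∧
      ((d : ℝ) / (2 * Real.pi * Real.exp 1)) *
          Real.exp ((2 / (d : ℝ)) *
            (((d : ℝ) / 2) * (1 + Real.log (2 * Real.pi)) +
              (1 / 2) * Real.log ((σ ^ 2 • (1 : Matrix (Fin d) (Fin d) ℝ)).det))) =
        (d : ℝ) * σ ^ 2 := by
  have hrhs := div_mul_exp_gaussianEntropy_smul_one d hσ.ne'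
  set v : ℝ≥0 := ⟨σ ^ 2, sq_nonneg σ⟩
  have hvσ : (v : ℝ) = σ ^ 2 := rfl
  have hv : v ≠ 0 := by rw [ne_eq, ← NNReal.coe_eq_zero, hvσ]; positivity
  rw [show (d : ℝ) = Fintype.card (Fin d) by simp, ← hvσ] at hgauss
  obtain ⟨hint, hmoment⟩ :=
    integrable_and_integral_norm_sub_sq_of_map_eq_gaussian hXmeas x hv hgauss
  refine ⟨?_, hrhs⟩
  calc ε ^ 2 / L ^ 2 * (1 - (μ {ω | Z' ω ∈ A ∧ ‖Z' ω - z‖ < ε}).toReal)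
      ≤ ε ^ 2 / L ^ 2 * μ.real {ω | ε ≤ L * ‖X' ω - x‖} := by
        gcongr
        exact one_sub_measureReal_le_of_lipschitzOn_image hlip hZA hzA hX' hx
    _ ≤ ∫ ω, ‖X' ω - x‖ ^ 2 ∂μ := sq_div_sq_mul_measureReal_le_integral_norm_sub_sq hint hL hε
    _ = d * σ ^ 2 := by rw [hmoment, Fintype.card_fin, hvσ]
    _ = _ := hrhs.symm

/-- Combining the Lipschitz probability bound with the Gaussian
MSE/entropy identity. Under the hypotheses of Statement 0, if `X' = f⁻¹ ∘ Z'` is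
Gaussian with mean `x = f⁻¹ z` and covariance `σ²·I_d` (encoded by its density),
then for every `ε ≥ 0`,
`(ε²/L²)(1 − ℙ(Z' ∈ B^ε_z)) ≤ (d/(2πe))·exp((2/d)·H_Σ)`, and the right-hand side
equals `d·σ²`, where `H_Σ = (d/2)(1 + log(2π)) + (1/2)·log(det(σ²·I_d))`. -/
theorem stmt9 {d : ℕ} (hd : 0 < d) {Ω : Type*} [MeasurableSpace Ω] (μ : Measure Ω)
    [IsProbabilityMeasure μ]
    (A : Set (EuclideanSpace ℝ (Fin d)))
    (f : EuclideanSpace ℝ (Fin d) → EuclideanSpace ℝ (Fin d))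
    (hf : Function.Bijective f) (L : ℝ) (hL : 0 < L)
    (hlip : ∀ x₁ x₂ : EuclideanSpace ℝ (Fin d),
      f x₁ ∈ A → f x₂ ∈ A → ‖f x₁ - f x₂‖ ≤ L * ‖x₁ - x₂‖)
    (Z' : Ω → EuclideanSpace ℝ (Fin d)) (hZmeas : Measurable Z')
    (hZA : ∀ᵐ ω ∂μ, Z' ω ∈ A)
    (hZint : Integrable Z' μ)
    (z : EuclideanSpace ℝ (Fin d)) (hz : z = ∫ ω, Z' ω ∂μ) (hzA : z ∈ A)
    (X' : Ω → EuclideanSpace ℝ (Fin d)) (hX' : ∀ ω, f (X' ω) = Z' ω)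
    (hXmeas : Measurable X')
    (x : EuclideanSpace ℝ (Fin d)) (hx : f x = z)
    (σ : ℝ) (hσ : 0 < σ)
    (hgauss : Measure.map X' μ =
      volume.withDensity (fun y => ENNReal.ofReal
        ((2 * Real.pi * σ ^ 2) ^ (-(d : ℝ) / 2) *
          Real.exp (-‖y - x‖ ^ 2 / (2 * σ ^ 2)))))
    (ε : ℝ) (hε : 0 ≤ ε) :
    (ε ^ 2 / L ^ 2) * (1 - (μ {ω | Z' ω ∈ A ∧ ‖Z' ω - z‖ < ε}).toReal) ≤
        ((d : ℝ) / (2 * Real.pi * Real.exp 1)) *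
          Real.exp ((2 / (d : ℝ)) *
            (((d : ℝ) / 2) * (1 + Real.log (2 * Real.pi)) +
              (1 / 2) * Real.log ((σ ^ 2 • (1 : Matrix (Fin d) (Fin d) ℝ)).det))) ∧
      ((d : ℝ) / (2 * Real.pi * Real.exp 1)) *
          Real.exp ((2 / (d : ℝ)) *
            (((d : ℝ) / 2) * (1 + Real.log (2 * Real.pi)) +
              (1 / 2) * Real.log ((σ ^ 2 • (1 : Matrix (Fin d) (Fin d) ℝ)).det))) =
        (d : ℝ) * σ ^ 2 :=
  stmt9_general μ A f L hL hlip Z' hZA z hzA X' hX' hXmeas x hx σ hσ hgauss ε hε
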